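/- Let G be convex and differentiable with L-Lipschitz gradient, 0 < τ ≤ 1/L, θ_k = 2/(k+2), z^k = y^{k-1} + θ_{k-1}^{-1}(y^k - y^{k-1}). Then the accelerated gradient iteration satisfies the one-step estimate G(y^{k+1}) ≤ (1-θ_k)G(y^k) + θ_k G(y*) + (θ_k²/(2τ))‖y* - z^k‖² - (θ_k²/(2τ))‖y* - z^{k+1}‖², where y* is any minimizer of G. -/

import Mathlib

abbrev E (n : ℕ) := EuclideanSpace ℝ (Fin n)

/-!
Write `x = ỹᵏ` and `v = ∇G(x)`. Convexity at `x` together with the descent lemma for an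
`L`-Lipschitz gradient and `Lτ ≤ 1` gives, for every `w`,
`G(x - τv) ≤ G(w) + ⟪v, x - w⟫ - (τ/2)‖v‖²`.
The choice of `αₖ` keeps `ỹᵏ = (1 - θₖ) yᵏ + θₖ zᵏ`, so `zᵏ⁺¹ = zᵏ - (τ/θₖ) v`.
Averaging the inequality at `w = yᵏ` and `w = y*` with weights `1 - θₖ`, `θₖ` leaves
`θₖ⟪v, zᵏ - y*⟫ - (τ/2)‖v‖²`, which is exactly
`(θₖ²/2τ)(‖y* - zᵏ‖² - ‖y* - zᵏ⁺¹‖²)`.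
-/

open RealInnerProductSpace Set

section GradientMethod

variable {F : Type*} [NormedAddCommGroup F] [InnerProductSpace ℝ F] [CompleteSpace F]
  {G : F → ℝ}

theorem HasGradientAt.hasDerivAt_comp_add_smul {g x v : F} {t : ℝ}
    (h : HasGradientAt G g (x + t • v)) :
    HasDerivAt (fun s : ℝ => G (x + s • v)) ⟪g, v⟫ t := by
  have hline : HasDerivAt (fun s : ℝ => x + s • v) v t := by
    simpa using ((hasDerivAt_id t).smul_const v).const_add x
  simpa only [Function.comp_def, InnerProductSpace.toDual_apply_apply] using
    (hasGradientAt_iff_hasFDerivAt.mp h).comp_hasDerivAt t hline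

theorem ConvexOn.add_inner_sub_le_of_hasGradientAt (hG : ConvexOn ℝ univ G) {g x : F}
    (hg : HasGradientAt G g x) (w : F) : G x + ⟪g, w - x⟫ ≤ G w := by
  have hline : ConvexOn ℝ univ (fun t : ℝ => G (x + t • (w - x))) := by
    have hlineMap : G ∘ AffineMap.lineMap x w = fun t : ℝ => G (x + t • (w - x)) := by
      funext t
      simp only [Function.comp_apply, AffineMap.lineMap_apply_module', add_comm]
    simpa only [preimage_univ, hlineMap] using hG.comp_affineMap (AffineMap.lineMap x w)
  have hd : HasDerivAt (fun t : ℝ => G (x + t • (w - x))) ⟪g, w - x⟫ 0 :=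
    HasGradientAt.hasDerivAt_comp_add_smul (by simpa using hg)
  have hslope := hline.le_slope_of_hasDerivAt (mem_univ 0) (mem_univ 1) zero_lt_one hd
  simp only [slope_def_field, one_smul, add_sub_cancel, zero_smul, add_zero, sub_zero, div_one]
    at hslope
  linarith

theorem le_add_inner_sub_add_sq_of_lipschitz_gradient {g : F → F} {L : ℝ}
    (hg : ∀ y, HasGradientAt G (g y) y)
    (hlip : ∀ y₁ y₂, ‖g y₁ - g y₂‖ ≤ L * ‖y₁ - y₂‖) (x w : F) :
    G w ≤ G x + ⟪g x, w - x⟫ + L / 2 * ‖w - x‖ ^ 2 := by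
  set v := w - x
  let ψ : ℝ → ℝ := fun t => G (x + t • v) - ⟪g x, v⟫ * t - L / 2 * ‖v‖ ^ 2 * t ^ 2
  have hψ : ∀ t, HasDerivAt ψ (⟪g (x + t • v) - g x, v⟫ - L * ‖v‖ ^ 2 * t) t := by
    intro t
    have hlinear : HasDerivAt (fun s : ℝ => ⟪g x, v⟫ * s) ⟪g x, v⟫ t := by
      simpa using (hasDerivAt_id t).const_mul ⟪g x, v⟫
    have hquadratic : HasDerivAt (fun s : ℝ => L / 2 * ‖v‖ ^ 2 * s ^ 2)
        (L / 2 * ‖v‖ ^ 2 * (2 * t)) t := by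
      simpa using (hasDerivAt_pow 2 t).const_mul (L / 2 * ‖v‖ ^ 2)
    exact (((hg _).hasDerivAt_comp_add_smul.sub hlinear).sub hquadratic).congr_deriv
      (by rw [inner_sub_left]; ring)
  have hψ_nonpos : ∀ t ∈ interior (Icc (0 : ℝ) 1),
      ⟪g (x + t • v) - g x, v⟫ - L * ‖v‖ ^ 2 * t ≤ 0 := by
    intro t ht
    rw [interior_Icc] at ht
    refine sub_nonpos.2 ?_
    calc ⟪g (x + t • v) - g x, v⟫ ≤ ‖g (x + t • v) - g x‖ * ‖v‖ := real_inner_le_norm _ _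
      _ ≤ L * ‖x + t • v - x‖ * ‖v‖ := by gcongr; exact hlip _ _
      _ = L * ‖v‖ ^ 2 * t := by
        rw [add_sub_cancel_left, norm_smul, Real.norm_of_nonneg ht.1.le]; ring
  have hanti : AntitoneOn ψ (Icc 0 1) :=
    antitoneOn_of_hasDerivWithinAt_nonpos (convex_Icc 0 1)
      (HasDerivAt.continuousOn fun t _ => hψ t) (fun t _ => (hψ t).hasDerivWithinAt) hψ_nonpos
  have h01 := hanti (left_mem_Icc.2 zero_le_one) (right_mem_Icc.2 zero_le_one) zero_le_one
  simp only [ψ, v, zero_smul, one_smul, add_zero, add_sub_cancel] at h01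
  linarith

theorem ConvexOn.gradient_step_le (hG : ConvexOn ℝ univ G) {g : F → F} {L τ : ℝ}
    (hg : ∀ y, HasGradientAt G (g y) y)
    (hlip : ∀ y₁ y₂, ‖g y₁ - g y₂‖ ≤ L * ‖y₁ - y₂‖) (hτ : 0 ≤ τ) (hLτ : L * τ ≤ 1)
    (x w : F) : G (x - τ • g x) ≤ G w + ⟪g x, x - w⟫ - τ / 2 * ‖g x‖ ^ 2 := by
  have hdescent := le_add_inner_sub_add_sq_of_lipschitz_gradient hg hlip x (x - τ • g x)
  have hsupport := hG.add_inner_sub_le_of_hasGradientAt (hg x) w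
  rw [sub_sub_cancel_left, norm_neg, norm_smul, inner_neg_right, real_inner_smul_right,
    real_inner_self_eq_norm_sq, Real.norm_of_nonneg hτ] at hdescent
  rw [← neg_sub, inner_neg_right] at hsupport
  nlinarith [mul_nonneg hτ (sq_nonneg ‖g x‖)]

theorem ConvexOn.accelerated_step_le (hG : ConvexOn ℝ univ G) {g : F → F} {L τ θ : ℝ}
    (hg : ∀ y, HasGradientAt G (g y) y)
    (hlip : ∀ y₁ y₂, ‖g y₁ - g y₂‖ ≤ L * ‖y₁ - y₂‖) (hτ : 0 < τ) (hLτ : L * τ ≤ 1)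
    (hθ₀ : 0 < θ) (hθ₁ : θ ≤ 1) {x y z y' z' : F} (w : F)
    (hx : x = (1 - θ) • y + θ • z) (hy' : y' = x - τ • g x) (hz' : z' = y + θ⁻¹ • (y' - y)) :
    G y' ≤ (1 - θ) * G y + θ * G w + θ ^ 2 / (2 * τ) * ‖w - z‖ ^ 2 -
      θ ^ 2 / (2 * τ) * ‖w - z'‖ ^ 2 := by
  have hz'_step : w - z' = (w - z) + (τ / θ) • g x := by
    rw [hz', hy', hx]
    match_scalars <;> field_simp
    ring
  have hinner : (1 - θ) * ⟪g x, x - y⟫ + θ * ⟪g x, x - w⟫ = θ * ⟪g x, z - w⟫ := by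
    rw [← real_inner_smul_right, ← real_inner_smul_right, ← inner_add_right,
      ← real_inner_smul_right, hx]
    congr 1
    module
  have hnorm : θ ^ 2 / (2 * τ) * ‖w - z‖ ^ 2 - θ ^ 2 / (2 * τ) * ‖w - z'‖ ^ 2 =
      θ * ⟪g x, z - w⟫ - τ / 2 * ‖g x‖ ^ 2 := by
    rw [hz'_step, norm_add_sq_real, real_inner_smul_right, norm_smul, Real.norm_of_nonneg
      (by positivity), real_inner_comm, ← neg_sub z w, inner_neg_right]
    field_simp
    ring
  have hstep_y := hG.gradient_step_le hg hlip hτ.le hLτ x y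
  have hstep_w := hG.gradient_step_le hg hlip hτ.le hLτ x w
  rw [← hy'] at hstep_y hstep_w
  linarith [mul_le_mul_of_nonneg_left hstep_y (sub_nonneg.2 hθ₁),
    mul_le_mul_of_nonneg_left hstep_w hθ₀.le]

end GradientMethod

theorem extrapolation_eq_convex_combination {V : Type*} [AddCommGroup V] [Module ℝ V]
    {θ α : ℕ → ℝ} {y ty z : ℕ → V} (hθ : θ 0 = 1)
    (hα : ∀ k, α k = 1 + θ (k + 1) * ((θ k)⁻¹ - 1)) (h0 : ty 0 = y 0)
    (hty : ∀ k, ty (k + 1) = α k • y (k + 1) + (1 - α k) • y k) (hz0 : z 0 = y 0)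
    (hz : ∀ k, z (k + 1) = y k + (θ k)⁻¹ • (y (k + 1) - y k)) :
    ∀ k, ty k = (1 - θ k) • y k + θ k • z k
  | 0 => by simp [h0, hz0, hθ]
  | k + 1 => by rw [hty, hz, hα]; module

theorem accelerated_gradient_one_step_general {m : ℕ}
    (G : E m → ℝ) (g : E m → E m) (L τ : ℝ)
    (hconv : ConvexOn ℝ Set.univ G)
    (hgrad : ∀ y, HasGradientAt G (g y) y)
    (hlip : ∀ y₁ y₂ : E m, ‖g y₁ - g y₂‖ ≤ L * ‖y₁ - y₂‖)
    (ystar : E m)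
    (hτ0 : 0 < τ) (hτ : τ ≤ 1 / L)
    (θ α : ℕ → ℝ)
    (hθ : ∀ k : ℕ, θ k = 2 / ((k : ℝ) + 2))
    (hα : ∀ k : ℕ, α k = 1 + θ (k + 1) * ((θ k)⁻¹ - 1))
    (y ty z : ℕ → E m) (h0 : ty 0 = y 0)
    (hy : ∀ k, y (k + 1) = ty k - τ • g (ty k))
    (hty : ∀ k, ty (k + 1) = α k • y (k + 1) + (1 - α k) • y k)
    (hz0 : z 0 = y 0)
    (hz : ∀ k, z (k + 1) = y k + (θ k)⁻¹ • (y (k + 1) - y k)) :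
    ∀ k : ℕ,
      G (y (k + 1)) ≤ (1 - θ k) * G (y k) + θ k * G ystar +
        (θ k ^ 2 / (2 * τ)) * ‖ystar - z k‖ ^ 2 -
        (θ k ^ 2 / (2 * τ)) * ‖ystar - z (k + 1)‖ ^ 2 := by
  have hL : 0 < L := by
    by_contra! hL
    linarith [hτ.trans (one_div_nonpos.2 hL)]
  have hLτ : L * τ ≤ 1 := by rwa [le_div_iff₀ hL, mul_comm] at hτ
  have hθ_pos (k : ℕ) : 0 < θ k := by rw [hθ]; positivity
  have hθ_le_one (k : ℕ) : θ k ≤ 1 := by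
    rw [hθ, div_le_one (by positivity)]
    linarith [k.cast_nonneg (α := ℝ)]
  have hty_eq := extrapolation_eq_convex_combination (by simp [hθ]) hα h0 hty hz0 hz
  intro k
  exact hconv.accelerated_step_le hgrad hlip hτ0 hLτ (hθ_pos k) (hθ_le_one k) ystar
    (hty_eq k) (hy k) (hz k)

theorem accelerated_gradient_one_step {m : ℕ}
    (G : E m → ℝ) (g : E m → E m) (L τ : ℝ)
    (hconv : ConvexOn ℝ Set.univ G)
    (hgrad : ∀ y, HasGradientAt G (g y) y)
    (hlip : ∀ y₁ y₂ : E m, ‖g y₁ - g y₂‖ ≤ L * ‖y₁ - y₂‖)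
    (ystar : E m) (hmin : ∀ y, G ystar ≤ G y)
    (hτ0 : 0 < τ) (hτ : τ ≤ 1 / L)
    (θ α : ℕ → ℝ)
    (hθ : ∀ k : ℕ, θ k = 2 / ((k : ℝ) + 2))
    (hα : ∀ k : ℕ, α k = 1 + θ (k + 1) * ((θ k)⁻¹ - 1))
    (y ty z : ℕ → E m) (h0 : ty 0 = y 0)
    (hy : ∀ k, y (k + 1) = ty k - τ • g (ty k))
    (hty : ∀ k, ty (k + 1) = α k • y (k + 1) + (1 - α k) • y k)
    (hz0 : z 0 = y 0)
    (hz : ∀ k, z (k + 1) = y k + (θ k)⁻¹ • (y (k + 1) - y k)) :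
    ∀ k : ℕ,
      G (y (k + 1)) ≤ (1 - θ k) * G (y k) + θ k * G ystar +
        (θ k ^ 2 / (2 * τ)) * ‖ystar - z k‖ ^ 2 -
        (θ k ^ 2 / (2 * τ)) * ‖ystar - z (k + 1)‖ ^ 2 :=
  accelerated_gradient_one_step_general G g L τ hconv hgrad hlip ystar hτ0 hτ θ α hθ hα y ty z h0 hy
    hty hz0 hz
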